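/- Let k ≥ 1 be a fixed integer and p(n) = (log n + (k+1)·log log n − log log log n)/n. Then almost surely the following three statements hold simultaneously in G(n, p(n)): (1) every neighbor of a small vertex is a large vertex; (2) every large vertex has at most one small neighbor; (3) no two distinct small vertices have a common neighbor. -/

import Mathlib

open Filter Asymptotics
open scoped Classical

noncomputable section

/-- The number of edges of a simple graph on a finite vertex type. -/
def edgeCount {V : Type*} [Fintype V] (G : SimpleGraph V) : ℕ :=
  G.edgeFinset.card

/-- Probability in the Erdős–Rényi model `G(n,p)` of a set `A` of graphs on `Fin n`:
each of the `n.choose 2` possible edges is present independently with probability `p`. -/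
def gnpProb (n : ℕ) (p : ℝ) (A : Set (SimpleGraph (Fin n))) : ℝ :=
  ∑ G ∈ Finset.univ.filter (fun G => G ∈ A),
    p ^ edgeCount G * (1 - p) ^ (n.choose 2 - edgeCount G)

/-- Probability in the uniform model `G(n,M)` of a set `A` of graphs on `Fin n`:
all graphs with exactly `M` edges are equally likely. -/
def gnmProb (n M : ℕ) (A : Set (SimpleGraph (Fin n))) : ℝ :=
  ((Finset.univ.filter (fun G : SimpleGraph (Fin n) => edgeCount G = M ∧ G ∈ A)).card : ℝ) /
    ((Finset.univ.filter (fun G : SimpleGraph (Fin n) => edgeCount G = M)).card : ℝ)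

/-- `κ(S)`: the largest number of internally disjoint trees connecting `S`, i.e. trees
`T₁, …, T_k` of `G` with `S ⊆ V(Tᵢ)`, `V(Tᵢ) ∩ V(Tⱼ) = S` and `E(Tᵢ) ∩ E(Tⱼ) = ∅`
for `i ≠ j`. -/
def kappaSet {V : Type*} (G : SimpleGraph V) (S : Set V) : ℕ :=
  sSup {k | ∃ T : Fin k → G.Subgraph,
    (∀ i, S ⊆ (T i).verts ∧ ((T i).coe).IsTree) ∧
    (∀ i j, i ≠ j → (T i).verts ∩ (T j).verts = S ∧
      (T i).edgeSet ∩ (T j).edgeSet = ∅)}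

/-- `λ(S)`: the largest number of pairwise edge-disjoint trees of `G` each containing `S`. -/
def lambdaSet {V : Type*} (G : SimpleGraph V) (S : Set V) : ℕ :=
  sSup {k | ∃ T : Fin k → G.Subgraph,
    (∀ i, S ⊆ (T i).verts ∧ ((T i).coe).IsTree) ∧
    (∀ i j, i ≠ j → (T i).edgeSet ∩ (T j).edgeSet = ∅)}

/-- The generalized `r`-connectivity `κ_r(G)`: the minimum of `κ(S)` over `r`-subsets `S`,
and `0` if `G` is disconnected. -/
def genKappa {V : Type*} [Fintype V] (r : ℕ) (G : SimpleGraph V) : ℕ :=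
  if G.Connected then
    sInf {k | ∃ S : Finset V, S.card = r ∧ kappaSet G ↑S = k}
  else 0

/-- The generalized `r`-edge-connectivity `λ_r(G)`: the minimum of `λ(S)` over
`r`-subsets `S`, and `0` if `G` is disconnected. -/
def genLambda {V : Type*} [Fintype V] (r : ℕ) (G : SimpleGraph V) : ℕ :=
  if G.Connected then
    sInf {k | ∃ S : Finset V, S.card = r ∧ lambdaSet G ↑S = k}
  else 0

/-- The vertex connectivity `κ(G)`: the largest `k` such that `G` is `k`-connected,
i.e. `k < |V|` and the removal of fewer than `k` vertices leaves a connected graph. -/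
def vertexConnectivity {V : Type*} [Fintype V] (G : SimpleGraph V) : ℕ :=
  sSup {k | k < Fintype.card V ∧
    ∀ S : Finset V, S.card < k → (G.induce ((↑S : Set V)ᶜ)).Connected}

/-- The edge connectivity `λ(G)`: the largest `k` such that removing fewer than `k`
edges always leaves a connected graph. -/
def edgeConnectivity {V : Type*} [Fintype V] (G : SimpleGraph V) : ℕ :=
  sSup {k | ∀ F : Finset (Sym2 V), F.card < k → (G.deleteEdges ↑F).Connected}

/-- The minimum degree `δ(G)`. -/
def minDeg {V : Type*} [Fintype V] (G : SimpleGraph V) : ℕ :=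
  G.minDegree

/-- The number of children of `v` in the graph `H` viewed as rooted at `r`:
neighbours of `v` lying one step further from the root. -/
def childCount {W : Type*} (H : SimpleGraph W) (r v : W) : ℕ :=
  {w | H.Adj v w ∧ H.dist r w = H.dist r v + 1}.ncard

/-- The depth of the graph `H` viewed as rooted at `r`: the largest distance from `r`. -/
def rootedDepth {W : Type*} (H : SimpleGraph W) (r : W) : ℕ :=
  sSup (Set.range (H.dist r))

/-- `T` is a subtree of `G` rooted at `r`, of depth `d`, in which every non-leaf
vertex has exactly `t` children (a `t`-ary tree of depth `d`). -/
def IsAryTreeOfDepth {V : Type*} {G : SimpleGraph V} (T : G.Subgraph) (r : V)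
    (t d : ℕ) : Prop :=
  ∃ hr : r ∈ T.verts,
    T.coe.IsTree ∧ rootedDepth T.coe ⟨r, hr⟩ = d ∧
      ∀ v : T.verts, childCount T.coe ⟨r, hr⟩ v = 0 ∨ childCount T.coe ⟨r, hr⟩ v = t

end

/-!
A small vertex has degree at most `t = ⌊log n / 100⌋`, and the three facts can only fail if
two small vertices `u, v` are adjacent or have a common neighbour `w`. Such a configuration
forces the edges `F` inside `S = {u, v}` or `S = {u, v, w}` and leaves at most `2t` of the
`2(n - |S|)` edges from `{u, v}` to the outside of `S` present. Markov's inequality for `r` to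
the number of those edges present, whose expectation factorises over the independent edges,
bounds its probability by `r⁻²ᵗ p^|F| (1 - (1 - r) p)^(2(n - |S|))`. With `r = e⁻²` and
`np ≥ log n` this is `O(n^(1/25 - 4/3) p^|F|)`, and the union bound over the `n²` pairs and
`n³` triples gives `O((log n)² n^(-22/75)) → 0`.
-/

open Finset Real Topology

namespace SimpleGraph

variable {V : Type*} [DecidableEq V]

section Fintype

variable [Fintype V]

theorem filter_edgeFinset_top_mem_edgeSet (G : SimpleGraph V) :
    {e ∈ (⊤ : SimpleGraph V).edgeFinset | e ∈ G.edgeSet} = G.edgeFinset := by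
  ext e
  simpa using fun h => G.not_isDiag_of_mem_edgeSet h

theorem sum_prod_ite_mem_edgeSet {R : Type*} [CommSemiring R] (a b : Sym2 V → R) :
    ∑ G : SimpleGraph V, ∏ e ∈ (⊤ : SimpleGraph V).edgeFinset,
        (if e ∈ G.edgeSet then a e else b e) =
      ∏ e ∈ (⊤ : SimpleGraph V).edgeFinset, (a e + b e) := by
  rw [prod_add]
  refine sum_nbij' (fun G => G.edgeFinset) (fun s => fromEdgeSet ↑s)
    (fun G _ => mem_powerset.2 (edgeFinset_mono le_top)) (by simp) (by simp) ?_ ?_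
  · intro s hs
    ext e
    simp only [mem_edgeFinset, edgeSet_fromEdgeSet, Set.mem_sdiff, mem_coe]
    exact ⟨fun h => h.1, fun h => ⟨h, not_isDiag_of_mem_edgeFinset (mem_powerset.1 hs h)⟩⟩
  · intro G _
    rw [prod_ite, filter_edgeFinset_top_mem_edgeSet]
    congr 2
    ext e
    simp

end Fintype

def starEdges (u : V) (T : Finset V) : Finset (Sym2 V) :=
  T.image fun y => s(u, y)

theorem card_starEdges (u : V) (T : Finset V) : #(starEdges u T) = #T :=
  card_image_of_injective _ fun _ _ => Sym2.congr_right.1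

theorem starEdges_subset_edgeFinset_top [Fintype V] {u : V} {T : Finset V} (hu : u ∉ T) :
    starEdges u T ⊆ (⊤ : SimpleGraph V).edgeFinset := by
  rw [starEdges, image_subset_iff]
  intro y hy
  simpa using fun huy : u = y => hu (huy ▸ hy)

theorem disjoint_starEdges {u v : V} {T : Finset V} (huv : u ≠ v) (hu : u ∉ T) :
    Disjoint (starEdges u T) (starEdges v T) := by
  rw [starEdges, starEdges, Finset.disjoint_left]
  simp only [mem_image]
  rintro _ ⟨y, -, rfl⟩ ⟨y', hy', h⟩
  rcases Sym2.eq_iff.1 h with ⟨h, -⟩ | ⟨-, h⟩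
  exacts [huv h.symm, hu (h ▸ hy')]

theorem disjoint_sym2_starEdges {S T : Finset V} (hST : Disjoint S T) (u : V) :
    Disjoint S.sym2 (starEdges u T) := by
  rw [starEdges, Finset.disjoint_right]
  simp only [mem_image]
  rintro _ ⟨y, hy, rfl⟩ huyS
  exact Finset.disjoint_left.1 hST (Finset.mk_mem_sym2_iff.1 huyS).2 hy

theorem card_filter_starEdges_le_degree (G : SimpleGraph V) (u : V) [Fintype (G.neighborSet u)]
    (T : Finset V) : #{e ∈ starEdges u T | e ∈ G.edgeSet} ≤ G.degree u := by
  rw [starEdges, filter_image, ← card_neighborFinset_eq_degree]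
  refine card_image_le.trans (card_le_card fun y hy => ?_)
  simpa using (mem_filter.1 hy).2

end SimpleGraph

open SimpleGraph

section Weight

variable {V : Type*} [Fintype V] [DecidableEq V]

noncomputable def gnpWeight (p : ℝ) (G : SimpleGraph V) : ℝ :=
  ∏ e ∈ (⊤ : SimpleGraph V).edgeFinset, if e ∈ G.edgeSet then p else 1 - p

theorem gnpWeight_eq_pow_mul_pow (p : ℝ) (G : SimpleGraph V) :
    gnpWeight p G = p ^ edgeCount G * (1 - p) ^ ((Fintype.card V).choose 2 - edgeCount G) := by
  have hcard := card_filter_add_card_filter_not (s := (⊤ : SimpleGraph V).edgeFinset)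
    (p := (· ∈ G.edgeSet))
  rw [filter_edgeFinset_top_mem_edgeSet, card_edgeFinset_top_eq_card_choose_two] at hcard
  rw [gnpWeight, prod_ite, prod_const, prod_const, filter_edgeFinset_top_mem_edgeSet, edgeCount]
  congr 2
  omega

theorem gnpWeight_nonneg {p : ℝ} (hp0 : 0 ≤ p) (hp1 : p ≤ 1) (G : SimpleGraph V) :
    0 ≤ gnpWeight p G :=
  prod_nonneg fun _ _ => by split_ifs <;> linarith

theorem sum_gnpWeight (p : ℝ) : ∑ G : SimpleGraph V, gnpWeight p G = 1 := by
  simp only [gnpWeight, sum_prod_ite_mem_edgeSet, add_sub_cancel, prod_const_one]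

theorem sum_gnpWeight_mul_prod (p : ℝ) (a b : Sym2 V → ℝ) :
    ∑ G : SimpleGraph V, gnpWeight p G *
        ∏ e ∈ (⊤ : SimpleGraph V).edgeFinset, (if e ∈ G.edgeSet then a e else b e) =
      ∏ e ∈ (⊤ : SimpleGraph V).edgeFinset, (p * a e + (1 - p) * b e) := by
  simp_rw [gnpWeight, ← prod_mul_distrib, ite_mul_ite]
  exact sum_prod_ite_mem_edgeSet _ _

end Weight

section GnpProb

variable {n : ℕ} {p : ℝ}

theorem gnpProb_eq_sum_indicator (A : Set (SimpleGraph (Fin n))) :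
    gnpProb n p A = ∑ G, A.indicator (gnpWeight p) G := by
  simp [gnpProb, sum_filter, Set.indicator_apply, gnpWeight_eq_pow_mul_pow]

theorem gnpProb_nonneg (hp0 : 0 ≤ p) (hp1 : p ≤ 1) (A : Set (SimpleGraph (Fin n))) :
    0 ≤ gnpProb n p A := by
  rw [gnpProb_eq_sum_indicator]
  exact sum_nonneg fun G _ => Set.indicator_nonneg (fun G _ => gnpWeight_nonneg hp0 hp1 G) G

theorem gnpProb_add_gnpProb_compl (A : Set (SimpleGraph (Fin n))) :
    gnpProb n p A + gnpProb n p Aᶜ = 1 := by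
  simp only [gnpProb_eq_sum_indicator, ← sum_add_distrib, Set.indicator_self_add_compl_apply,
    sum_gnpWeight]

theorem gnpProb_mono (hp0 : 0 ≤ p) (hp1 : p ≤ 1) {A B : Set (SimpleGraph (Fin n))}
    (hAB : A ⊆ B) : gnpProb n p A ≤ gnpProb n p B := by
  simp only [gnpProb_eq_sum_indicator]
  exact sum_le_sum fun G _ =>
    Set.indicator_le_indicator_of_subset hAB (fun G => gnpWeight_nonneg hp0 hp1 G) G

theorem gnpProb_le_sum {ι : Type*} (hp0 : 0 ≤ p) (hp1 : p ≤ 1) {A : Set (SimpleGraph (Fin n))}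
    (I : Finset ι) (B : ι → Set (SimpleGraph (Fin n))) (hA : ∀ G ∈ A, ∃ i ∈ I, G ∈ B i) :
    gnpProb n p A ≤ ∑ i ∈ I, gnpProb n p (B i) := by
  simp only [gnpProb_eq_sum_indicator]
  rw [sum_comm]
  refine sum_le_sum fun G _ => ?_
  have hnonneg : ∀ i ∈ I, 0 ≤ (B i).indicator (gnpWeight p) G := fun i _ =>
    Set.indicator_nonneg (fun G _ => gnpWeight_nonneg hp0 hp1 G) G
  by_cases hG : G ∈ A
  · obtain ⟨i, hi, hGi⟩ := hA G hG
    rw [Set.indicator_of_mem hG, ← Set.indicator_of_mem hGi (gnpWeight p)]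
    exact single_le_sum hnonneg hi
  · rw [Set.indicator_of_notMem hG]
    exact sum_nonneg hnonneg

theorem mul_gnpProb_le_prod (hp0 : 0 ≤ p) (hp1 : p ≤ 1) {A : Set (SimpleGraph (Fin n))}
    {c : ℝ} {a b : Sym2 (Fin n) → ℝ} (ha : ∀ e, 0 ≤ a e) (hb : ∀ e, 0 ≤ b e)
    (hA : ∀ G ∈ A, c ≤ ∏ e ∈ (⊤ : SimpleGraph (Fin n)).edgeFinset,
      (if e ∈ G.edgeSet then a e else b e)) :
    c * gnpProb n p A ≤ ∏ e ∈ (⊤ : SimpleGraph (Fin n)).edgeFinset, (p * a e + (1 - p) * b e) := by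
  rw [← sum_gnpWeight_mul_prod, gnpProb_eq_sum_indicator, mul_sum]
  refine sum_le_sum fun G _ => ?_
  have hW := gnpWeight_nonneg hp0 hp1 G
  by_cases hG : G ∈ A
  · rw [Set.indicator_of_mem hG, mul_comm]
    exact mul_le_mul_of_nonneg_left (hA G hG) hW
  · rw [Set.indicator_of_notMem hG, mul_zero]
    exact mul_nonneg hW (prod_nonneg fun e _ => by split_ifs <;> simp [ha, hb])

theorem pow_mul_gnpProb_subset_edgeSet_and_card_le (hp0 : 0 ≤ p) (hp1 : p ≤ 1)
    {F D : Finset (Sym2 (Fin n))} (hF : F ⊆ (⊤ : SimpleGraph (Fin n)).edgeFinset)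
    (hD : D ⊆ (⊤ : SimpleGraph (Fin n)).edgeFinset) (hFD : Disjoint F D) (m : ℕ) {r : ℝ}
    (hr0 : 0 ≤ r) (hr1 : r ≤ 1) :
    r ^ m * gnpProb n p {G | ↑F ⊆ G.edgeSet ∧ #{e ∈ D | e ∈ G.edgeSet} ≤ m} ≤
      p ^ #F * (1 - (1 - r) * p) ^ #D := by
  refine (mul_gnpProb_le_prod hp0 hp1 (a := fun e => if e ∈ D then r else 1)
    (b := fun e => if e ∈ F then 0 else 1) (fun e => by split_ifs <;> linarith)
    (fun e => by split_ifs <;> norm_num) ?_).trans_eq ?_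
  · rintro G ⟨hFG, hcount⟩
    have hfactor : ∀ e, (if e ∈ G.edgeSet then (if e ∈ D then r else 1)
        else (if e ∈ F then 0 else 1)) = if e ∈ {e ∈ D | e ∈ G.edgeSet} then r else 1 := by
      intro e
      by_cases heG : e ∈ G.edgeSet
      · simp [heG]
      · have heF : e ∉ F := fun h => heG (hFG h)
        simp [heG, heF]
    simp only [hfactor, prod_ite_mem, inter_eq_right.2 ((filter_subset _ _).trans hD),
      prod_const]
    exact pow_le_pow_of_le_one hr0 hr1 hcount
  · have hfactor : ∀ e, p * (if e ∈ D then r else 1) + (1 - p) * (if e ∈ F then 0 else 1) =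
        (if e ∈ F then p else 1) * (if e ∈ D then 1 - (1 - r) * p else 1) := by
      intro e
      by_cases heF : e ∈ F
      · simp [heF, Finset.disjoint_left.1 hFD heF]
      · split_ifs <;> ring
    simp only [hfactor, prod_mul_distrib, prod_ite_mem, inter_eq_right.2 hF, inter_eq_right.2 hD,
      prod_const]

theorem pow_mul_gnpProb_subset_edgeSet_and_degree_le (hp0 : 0 ≤ p) (hp1 : p ≤ 1)
    {S : Finset (Fin n)} {F : Finset (Sym2 (Fin n))}
    (hF : F ⊆ (⊤ : SimpleGraph (Fin n)).edgeFinset) (hFS : F ⊆ S.sym2) {u v : Fin n}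
    (huv : u ≠ v) (hu : u ∈ S) (hv : v ∈ S) (t : ℕ) {r : ℝ} (hr0 : 0 ≤ r) (hr1 : r ≤ 1) :
    r ^ (2 * t) * gnpProb n p {G | ↑F ⊆ G.edgeSet ∧ G.degree u ≤ t ∧ G.degree v ≤ t} ≤
      p ^ #F * (1 - (1 - r) * p) ^ (2 * (n - #S)) := by
  set D := starEdges u Sᶜ ∪ starEdges v Sᶜ
  have hD : #D = 2 * (n - #S) := by
    rw [card_union_of_disjoint (disjoint_starEdges huv (notMem_compl.2 hu)), card_starEdges,
      card_starEdges, card_compl, Fintype.card_fin]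
    ring
  have hFD : Disjoint F D :=
    disjoint_of_subset_left hFS (disjoint_union_right.2
      ⟨disjoint_sym2_starEdges disjoint_compl_right u,
        disjoint_sym2_starEdges disjoint_compl_right v⟩)
  have hDtop : D ⊆ (⊤ : SimpleGraph (Fin n)).edgeFinset :=
    union_subset (starEdges_subset_edgeFinset_top (notMem_compl.2 hu))
      (starEdges_subset_edgeFinset_top (notMem_compl.2 hv))
  rw [← hD]
  refine le_trans (mul_le_mul_of_nonneg_left (gnpProb_mono hp0 hp1 ?_) (by positivity))
    (pow_mul_gnpProb_subset_edgeSet_and_card_le hp0 hp1 hF hDtop hFD (2 * t) hr0 hr1)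
  rintro G ⟨hFG, hdu, hdv⟩
  refine ⟨hFG, ?_⟩
  calc #{e ∈ D | e ∈ G.edgeSet}
      ≤ #{e ∈ starEdges u Sᶜ | e ∈ G.edgeSet} + #{e ∈ starEdges v Sᶜ | e ∈ G.edgeSet} := by
        rw [filter_union]
        exact card_union_le _ _
    _ ≤ G.degree u + G.degree v :=
        add_le_add (card_filter_starEdges_le_degree G u _) (card_filter_starEdges_le_degree G v _)
    _ ≤ 2 * t := by omega

theorem pow_mul_gnpProb_adj_degree_le (hp0 : 0 ≤ p) (hp1 : p ≤ 1) {u v : Fin n} (huv : u ≠ v)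
    (t : ℕ) {r : ℝ} (hr0 : 0 ≤ r) (hr1 : r ≤ 1) :
    r ^ (2 * t) * gnpProb n p {G | G.Adj u v ∧ G.degree u ≤ t ∧ G.degree v ≤ t} ≤
      p * (1 - (1 - r) * p) ^ (2 * (n - 2)) := by
  have h := pow_mul_gnpProb_subset_edgeSet_and_degree_le hp0 hp1 (S := {u, v}) (F := {s(u, v)})
    (by simpa using huv) (by simp) huv (by simp) (by simp) t hr0 hr1
  rw [card_singleton, pow_one, card_pair huv] at h
  refine le_trans (mul_le_mul_of_nonneg_left (gnpProb_mono hp0 hp1 ?_) (by positivity)) h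
  rintro G ⟨hadj, hdeg⟩
  exact ⟨by simpa using hadj, hdeg⟩

theorem pow_mul_gnpProb_common_neighbor_degree_le (hp0 : 0 ≤ p) (hp1 : p ≤ 1) {u v w : Fin n}
    (huv : u ≠ v) (huw : u ≠ w) (hvw : v ≠ w) (t : ℕ) {r : ℝ} (hr0 : 0 ≤ r) (hr1 : r ≤ 1) :
    r ^ (2 * t) * gnpProb n p {G | G.Adj u w ∧ G.Adj v w ∧ G.degree u ≤ t ∧ G.degree v ≤ t} ≤
      p ^ 2 * (1 - (1 - r) * p) ^ (2 * (n - 3)) := by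
  have hF : s(u, w) ≠ s(v, w) := by simp [huv, huw]
  have h := pow_mul_gnpProb_subset_edgeSet_and_degree_le hp0 hp1 (S := {u, v, w})
    (F := {s(u, w), s(v, w)}) (by simp [insert_subset_iff, huw, hvw]) (by simp [insert_subset_iff])
    huv (by simp) (by simp) t hr0 hr1
  rw [card_pair hF, card_insert_of_notMem (by simp [huv, huw]), card_pair hvw] at h
  refine le_trans (mul_le_mul_of_nonneg_left (gnpProb_mono hp0 hp1 ?_) (by positivity)) h
  rintro G ⟨hu, hv, hdeg⟩
  exact ⟨by simp [Set.insert_subset_iff, hu, hv], hdeg⟩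

end GnpProb

section SmallVertexFacts

def smallVertexFacts {V : Type*} [Fintype V] (θ : ℝ) : Set (SimpleGraph V) :=
  {G | (∀ u v : V, (G.degree u : ℝ) < θ → G.Adj u v → θ ≤ (G.degree v : ℝ)) ∧
    (∀ v w w' : V, θ ≤ (G.degree v : ℝ) → (G.degree w : ℝ) < θ → (G.degree w' : ℝ) < θ →
      G.Adj v w → G.Adj v w' → w = w') ∧
    (∀ u v : V, u ≠ v → (G.degree u : ℝ) < θ → (G.degree v : ℝ) < θ →
      ¬ ∃ w : V, G.Adj u w ∧ G.Adj v w)}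

theorem small_adj_or_common_neighbor_of_notMem_smallVertexFacts {V : Type*} [Fintype V]
    {θ : ℝ} {G : SimpleGraph V} (hG : G ∉ smallVertexFacts θ) :
    (∃ u v, G.Adj u v ∧ (G.degree u : ℝ) < θ ∧ (G.degree v : ℝ) < θ) ∨
      ∃ u v w, u ≠ v ∧ G.Adj u w ∧ G.Adj v w ∧ (G.degree u : ℝ) < θ ∧ (G.degree v : ℝ) < θ := by
  simp only [smallVertexFacts, Set.mem_ofPred_eq, not_and_or, not_forall, not_le, not_not,
    exists_prop] at hG
  rcases hG with ⟨u, v, hu, huv, hv⟩ | ⟨v, w, w', -, hw, hw', hvw, hvw', hne⟩ |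
    ⟨u, v, huv, hu, hv, w, huw, hvw⟩
  · exact .inl ⟨u, v, huv, hu, hv⟩
  · exact .inr ⟨w, w', v, hne, hvw.symm, hvw'.symm, hw, hw'⟩
  · exact .inr ⟨u, v, w, huv, huw, hvw, hu, hv⟩

variable {n : ℕ} {p : ℝ}

theorem gnpProb_compl_smallVertexFacts_le_sum (hp0 : 0 ≤ p) (hp1 : p ≤ 1) (θ : ℝ) :
    gnpProb n p (smallVertexFacts θ)ᶜ ≤
      ∑ q : Fin n × Fin n with q.1 ≠ q.2,
          gnpProb n p {G | G.Adj q.1 q.2 ∧ G.degree q.1 ≤ ⌊θ⌋₊ ∧ G.degree q.2 ≤ ⌊θ⌋₊} +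
        ∑ q : Fin n × Fin n × Fin n with q.1 ≠ q.2.1 ∧ q.1 ≠ q.2.2 ∧ q.2.1 ≠ q.2.2,
          gnpProb n p {G | G.Adj q.1 q.2.2 ∧ G.Adj q.2.1 q.2.2 ∧
            G.degree q.1 ≤ ⌊θ⌋₊ ∧ G.degree q.2.1 ≤ ⌊θ⌋₊} := by
  have hsmall : ∀ d : ℕ, (d : ℝ) < θ → d ≤ ⌊θ⌋₊ := fun d hd => Nat.le_floor hd.le
  refine (gnpProb_le_sum hp0 hp1 _ (Sum.elim _ _) fun G hG => ?_).trans_eq (sum_disjSum _ _ _)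
  rcases small_adj_or_common_neighbor_of_notMem_smallVertexFacts hG with
    ⟨u, v, huv, hu, hv⟩ | ⟨u, v, w, hne, huw, hvw, hu, hv⟩
  · exact ⟨.inl (u, v), by simpa using huv.ne, huv, hsmall _ hu, hsmall _ hv⟩
  · exact ⟨.inr (u, v, w), by simpa using ⟨hne, huw.ne, hvw.ne⟩, huw, hvw, hsmall _ hu,
      hsmall _ hv⟩

theorem pow_mul_gnpProb_compl_smallVertexFacts_le (hp0 : 0 ≤ p) (hp1 : p ≤ 1) (θ : ℝ) {r : ℝ}
    (hr0 : 0 ≤ r) (hr1 : r ≤ 1) :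
    r ^ (2 * ⌊θ⌋₊) * gnpProb n p (smallVertexFacts θ)ᶜ ≤
      ((n : ℝ) ^ 2 * p + (n : ℝ) ^ 3 * p ^ 2) * (1 - (1 - r) * p) ^ (2 * (n - 3)) := by
  set β := 1 - (1 - r) * p
  have hβ0 : 0 ≤ β := by nlinarith
  have hβ1 : β ≤ 1 := by nlinarith
  have hpairs : #{q : Fin n × Fin n | q.1 ≠ q.2} ≤ n ^ 2 :=
    (card_filter_le _ _).trans (by simp [sq])
  have htriples :
      #{q : Fin n × Fin n × Fin n | q.1 ≠ q.2.1 ∧ q.1 ≠ q.2.2 ∧ q.2.1 ≠ q.2.2} ≤ n ^ 3 :=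
    (card_filter_le _ _).trans (by simp [pow_succ, mul_assoc])
  refine (mul_le_mul_of_nonneg_left (gnpProb_compl_smallVertexFacts_le_sum hp0 hp1 θ)
    (by positivity)).trans ?_
  rw [mul_add, mul_sum, mul_sum, add_mul]
  gcongr
  · refine (sum_le_card_nsmul _ _ (p * β ^ (2 * (n - 3))) fun q hq => ?_).trans ?_
    · exact (pow_mul_gnpProb_adj_degree_le hp0 hp1 (by simpa using hq) _ hr0 hr1).trans
        (mul_le_mul_of_nonneg_left (pow_le_pow_of_le_one hβ0 hβ1 (by omega)) hp0)
    · rw [nsmul_eq_mul, ← mul_assoc]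
      gcongr
      exact_mod_cast hpairs
  · refine (sum_le_card_nsmul _ _ (p ^ 2 * β ^ (2 * (n - 3))) fun q hq => ?_).trans ?_
    · simp only [mem_filter, mem_univ, true_and] at hq
      exact pow_mul_gnpProb_common_neighbor_degree_le hp0 hp1 hq.1 hq.2.1 hq.2.2 _ hr0 hr1
    · rw [nsmul_eq_mul, ← mul_assoc]
      gcongr
      exact_mod_cast htriples

theorem gnpProb_compl_smallVertexFacts_le_exp (hp0 : 0 ≤ p) (hp1 : p ≤ 1) (hn : 3 ≤ n)
    {θ : ℝ} (hθ : 0 ≤ θ) :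
    gnpProb n p (smallVertexFacts θ)ᶜ ≤
      exp (4 * θ) * ((n : ℝ) ^ 2 * p + (n : ℝ) ^ 3 * p ^ 2) * exp (4 * p - 4 / 3 * (p * n)) := by
  have hr : exp (-2) ≤ 1 / 3 := by
    rw [exp_neg, one_div]
    exact inv_anti₀ (by norm_num) (by linarith [add_one_le_exp 2])
  have hβ0 : 0 ≤ 1 - (1 - exp (-2)) * p := by nlinarith [exp_pos (-2)]
  have hweight : exp (-(4 * θ)) ≤ exp (-2) ^ (2 * ⌊θ⌋₊) := by
    rw [← exp_nat_mul, exp_le_exp]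
    have := Nat.floor_le hθ
    push_cast
    linarith
  have hdecay : (1 - (1 - exp (-2)) * p) ^ (2 * (n - 3)) ≤ exp (4 * p - 4 / 3 * (p * n)) := by
    calc (1 - (1 - exp (-2)) * p) ^ (2 * (n - 3))
        ≤ exp (-(2 / 3 * p)) ^ (2 * (n - 3)) := by
          gcongr
          nlinarith [add_one_le_exp (-(2 / 3 * p))]
      _ = exp (4 * p - 4 / 3 * (p * n)) := by
          rw [← exp_nat_mul]
          push_cast [Nat.cast_sub hn]
          ring_nf
  have hweighted := (mul_le_mul_of_nonneg_right hweight (gnpProb_nonneg hp0 hp1 _)).trans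
    ((pow_mul_gnpProb_compl_smallVertexFacts_le hp0 hp1 θ (exp_pos (-2)).le
      (by linarith)).trans (mul_le_mul_of_nonneg_left hdecay (by positivity)))
  calc gnpProb n p (smallVertexFacts θ)ᶜ
      = exp (4 * θ) * (exp (-(4 * θ)) * gnpProb n p (smallVertexFacts θ)ᶜ) := by
        rw [← mul_assoc, ← exp_add, add_neg_cancel, exp_zero, one_mul]
    _ ≤ _ := by
        rw [mul_assoc]
        gcongr

theorem gnpProb_compl_smallVertexFacts_le {x : ℝ} (hn : 3 ≤ n) (hc : 1 ≤ log n)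
    (hcx : log n ≤ x) (hxc : x ≤ 2 * log n) (hxn : x ≤ n) :
    gnpProb n (x / n) (smallVertexFacts (log n / 100))ᶜ ≤
      6 * exp 4 * (log n ^ 2 * exp (-(log n / 4))) := by
  set c := log n
  have hn0 : (0 : ℝ) < n := by positivity
  have hpn : x / n * n = x := div_mul_cancel₀ x hn0.ne'
  have hp0 : 0 ≤ x / n := div_nonneg (by linarith) hn0.le
  have hpoly : (n : ℝ) ^ 2 * (x / n) + (n : ℝ) ^ 3 * (x / n) ^ 2 ≤ 6 * c ^ 2 * exp c := by
    have : (n : ℝ) ^ 2 * (x / n) + (n : ℝ) ^ 3 * (x / n) ^ 2 = n * (x + x ^ 2) := by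
      field_simp
    rw [this, exp_log hn0, mul_comm]
    gcongr
    nlinarith
  calc gnpProb n (x / n) (smallVertexFacts (c / 100))ᶜ
      ≤ exp (4 * (c / 100)) * (6 * c ^ 2 * exp c) * exp (4 * 1 - 4 / 3 * c) := by
        refine (gnpProb_compl_smallVertexFacts_le_exp hp0 ((div_le_one hn0).2 hxn) hn
          (by positivity)).trans ?_
        rw [hpn]
        gcongr
        · exact (div_le_one hn0).2 hxn
    _ = 6 * exp 4 * (c ^ 2 * exp (-(22 / 75 * c))) := by
        rw [mul_comm (exp _), mul_assoc, mul_assoc, ← exp_add, ← exp_add,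
          show c + (4 * (c / 100) + (4 * 1 - 4 / 3 * c)) = 4 + -(22 / 75 * c) by ring, exp_add]
        ring
    _ ≤ 6 * exp 4 * (c ^ 2 * exp (-(c / 4))) := by
        gcongr
        linarith

end SmallVertexFacts

theorem tendsto_sq_mul_exp_neg_div_four :
    Tendsto (fun c : ℝ => c ^ 2 * exp (-(c / 4))) atTop (𝓝 0) := by
  have h := ((tendsto_pow_mul_exp_neg_atTop_nhds_zero 2).comp
    (tendsto_id.atTop_div_const (by norm_num : (0 : ℝ) < 4))).const_mul 16
  rw [mul_zero] at h
  refine h.congr fun c => ?_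
  simp only [Function.comp_apply, id]
  ring

theorem tendsto_gnpProb_smallVertexFacts {x : ℕ → ℝ} (hlow : ∀ᶠ n : ℕ in atTop, log n ≤ x n)
    (hup : ∀ᶠ n : ℕ in atTop, x n ≤ 2 * log n) :
    Tendsto (fun n : ℕ => gnpProb n (x n / n) (smallVertexFacts (log n / 100))) atTop (𝓝 1) := by
  have hlog : Tendsto (fun n : ℕ => log n) atTop atTop :=
    tendsto_log_atTop.comp tendsto_natCast_atTop_atTop
  have hlog_le : ∀ᶠ n : ℕ in atTop, log n ≤ n / 2 := by
    filter_upwards [tendsto_natCast_atTop_atTop.eventually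
      (isLittleO_log_id_atTop.bound (by norm_num : (0 : ℝ) < 1 / 2))] with n hn
    simp only [norm_eq_abs, id, Nat.abs_cast] at hn
    linarith [le_abs_self (log n)]
  have hbound := (tendsto_sq_mul_exp_neg_div_four.comp hlog).const_mul (6 * exp 4)
  rw [mul_zero] at hbound
  have hcompl : Tendsto (fun n : ℕ => gnpProb n (x n / n) (smallVertexFacts (log n / 100))ᶜ)
      atTop (𝓝 0) := by
    refine tendsto_of_tendsto_of_tendsto_of_le_of_le' tendsto_const_nhds hbound ?_ ?_
    · filter_upwards [hlow, hup, hlog_le, hlog.eventually_ge_atTop 0] with n hl hu hn hc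
      have hn0 : (0 : ℝ) ≤ n := n.cast_nonneg
      exact gnpProb_nonneg (div_nonneg (by linarith) hn0) (div_le_one_of_le₀ (by linarith) hn0) _
    · filter_upwards [hlow, hup, hlog_le, hlog.eventually_ge_atTop 1, eventually_ge_atTop 3]
        with n hl hu hn hc h3
      exact gnpProb_compl_smallVertexFacts_le h3 hc hl hu (by linarith)
  have h := tendsto_const_nhds (x := (1 : ℝ)).sub hcompl
  rw [sub_zero] at h
  refine h.congr fun n => ?_
  linarith [gnpProb_add_gnpProb_compl (p := x n / n) (smallVertexFacts (V := Fin n) (log n / 100))]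

theorem small_vertex_facts_as_general (k : ℕ) :
    Tendsto (fun n : ℕ =>
      gnpProb n ((Real.log n + ((k : ℝ) + 1) * Real.log (Real.log n) -
          Real.log (Real.log (Real.log n))) / n)
        {G : SimpleGraph (Fin n) |
          (∀ u v : Fin n, (G.degree u : ℝ) < Real.log n / 100 → G.Adj u v →
            Real.log n / 100 ≤ (G.degree v : ℝ)) ∧
          (∀ v w w' : Fin n, Real.log n / 100 ≤ (G.degree v : ℝ) →
            (G.degree w : ℝ) < Real.log n / 100 → (G.degree w' : ℝ) < Real.log n / 100 →
            G.Adj v w → G.Adj v w' → w = w') ∧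
          (∀ u v : Fin n, u ≠ v → (G.degree u : ℝ) < Real.log n / 100 →
            (G.degree v : ℝ) < Real.log n / 100 →
            ¬ ∃ w : Fin n, G.Adj u w ∧ G.Adj v w)})
      atTop (nhds 1) := by
  have hlog : Tendsto (fun n : ℕ => log n) atTop atTop :=
    tendsto_log_atTop.comp tendsto_natCast_atTop_atTop
  have hlow : ∀ᶠ c : ℝ in atTop, c ≤ c + ((k : ℝ) + 1) * log c - log (log c) := by
    filter_upwards [eventually_gt_atTop 1] with c hc
    have hL : 0 < log c := log_pos hc
    nlinarith [log_le_sub_one_of_pos hL]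
  have hup : ∀ᶠ c : ℝ in atTop, c + ((k : ℝ) + 1) * log c - log (log c) ≤ 2 * c := by
    filter_upwards [isLittleO_log_id_atTop.bound (by positivity : (0 : ℝ) < 1 / ((k : ℝ) + 1)),
      eventually_ge_atTop (exp 1)] with c hbound hc
    have hc0 : 0 < c := (exp_pos 1).trans_le hc
    have hL : 1 ≤ log c := by rwa [le_log_iff_exp_le hc0]
    rw [norm_eq_abs, norm_eq_abs, abs_of_nonneg (by linarith), id, abs_of_pos hc0,
      div_mul_eq_mul_div, one_mul, le_div_iff₀ (by positivity)] at hbound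
    linarith [log_nonneg hL]
  exact tendsto_gnpProb_smallVertexFacts (hlog.eventually hlow) (hlog.eventually hup)

/-- Almost surely, in `G(n, p(n))`: (1) every neighbour of a small vertex is large;
(2) every large vertex has at most one small neighbour; (3) no two distinct small
vertices have a common neighbour.  A vertex is large if its degree is at least
`log n/100`, and small otherwise. -/
theorem small_vertex_facts_as (k : ℕ) (hk : 1 ≤ k) :
    Tendsto (fun n : ℕ =>
      gnpProb n ((Real.log n + ((k : ℝ) + 1) * Real.log (Real.log n) -
          Real.log (Real.log (Real.log n))) / n)
        {G : SimpleGraph (Fin n) |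
          (∀ u v : Fin n, (G.degree u : ℝ) < Real.log n / 100 → G.Adj u v →
            Real.log n / 100 ≤ (G.degree v : ℝ)) ∧
          (∀ v w w' : Fin n, Real.log n / 100 ≤ (G.degree v : ℝ) →
            (G.degree w : ℝ) < Real.log n / 100 → (G.degree w' : ℝ) < Real.log n / 100 →
            G.Adj v w → G.Adj v w' → w = w') ∧
          (∀ u v : Fin n, u ≠ v → (G.degree u : ℝ) < Real.log n / 100 →
            (G.degree v : ℝ) < Real.log n / 100 →
            ¬ ∃ w : Fin n, G.Adj u w ∧ G.Adj v w)})
      atTop (nhds 1) :=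
  small_vertex_facts_as_general k
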